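/- arXiv:1112.6111 — 6 statements merged into one kernel-verified Lean document; each statement's English description precedes it below -/
import Mathlib

section
/- For all natural numbers n, x^n = Σ_{j=0}^{n} JS(n,j) · ⟨x⟩_j^{(γ)}, where ⟨x⟩_j^{(γ)} = ∏_{m=0}^{j-1} (x - m(m+2γ-1)) is the generalized falling factorial (with ⟨x⟩_0^{(γ)} = 1). -/
/-- Jacobi-Stirling numbers of the second kind, defined by the triangular
recurrence and initial conditions. -/
def JS {R : Type*} [CommRing R] (γ : R) : ℕ → ℕ → R
  | 0, 0 => 1
  | _ + 1, 0 => 0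
  | 0, _ + 1 => 0
  | n + 1, j + 1 => JS γ n j + ((j : R) + 1) * (((j : R) + 1) + 2 * γ - 1) * JS γ n (j + 1)

lemma JS_eq_zero {R : Type*} [CommRing R] (γ : R) : ∀ n j, n < j → JS γ n j = 0 := by
  intro n
  induction n with
  | zero =>
    intro j h
    cases j with
    | zero => omega
    | succ j => simp [JS]
  | succ n ih =>
    intro j h
    cases j with
    | zero => omega
    | succ j =>
      simp [JS, ih j (by omega), ih (j + 1) (by omega)]

open Polynomial Finset in
/-- Horizontal generating function: `x^n = Σ_j JS(n,j) ⟨x⟩_j^{(γ)}`. -/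
theorem JS_horizontal_generating_function {R : Type*} [CommRing R] (γ : R) (n : ℕ) :
    (Polynomial.X : Polynomial R) ^ n =
      ∑ j ∈ Finset.range (n + 1), Polynomial.C (JS γ n j) *
        ∏ m ∈ Finset.range j,
          (Polynomial.X - Polynomial.C ((m : R) * ((m : R) + 2 * γ - 1))) := by
  set F : ℕ → R[X] := fun j => ∏ m ∈ Finset.range j,
      (Polynomial.X - Polynomial.C ((m : R) * ((m : R) + 2 * γ - 1))) with hF
  have hFsucc : ∀ j, F (j + 1) = F j * (X - C ((j : R) * ((j : R) + 2 * γ - 1))) := by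
    intro j
    simp [hF, Finset.prod_range_succ]
  induction n with
  | zero => simp [JS, hF]
  | succ n ih =>
    have step : (X : R[X]) ^ (n + 1) = X * X ^ n := by ring
    rw [step, ih, Finset.mul_sum]
    have hterm : ∀ j, X * (C (JS γ n j) * F j)
        = C (JS γ n j) * F (j + 1) + C ((j : R) * ((j : R) + 2 * γ - 1) * JS γ n j) * F j := by
      intro j
      rw [hFsucc j]
      push_cast
      ring_nf
      simp [map_mul]
      ring
    calc ∑ j ∈ range (n + 1), X * (C (JS γ n j) * F j)
        = ∑ j ∈ range (n + 1), C (JS γ n j) * F (j + 1)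
          + ∑ j ∈ range (n + 1), C ((j : R) * ((j : R) + 2 * γ - 1) * JS γ n j) * F j := by
          rw [← Finset.sum_add_distrib]
          exact Finset.sum_congr rfl fun j _ => hterm j
      _ = ∑ j ∈ range (n + 2), C (JS γ (n + 1) j) * F j := by
          rw [Finset.sum_range_succ' (fun j => C (JS γ (n + 1) j) * F j)]
          have h0 : JS γ (n + 1) 0 = 0 := by simp [JS]
          rw [h0]
          simp only [map_zero, zero_mul, add_zero]
          have hsecond : ∑ j ∈ range (n + 1), C ((j : R) * ((j : R) + 2 * γ - 1) * JS γ n j) * F j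
              = ∑ j ∈ range (n + 1),
                  C (((j : R) + 1) * (((j : R) + 1) + 2 * γ - 1) * JS γ n (j + 1)) * F (j + 1) := by
            rw [Finset.sum_range_succ' (fun j => C ((j : R) * ((j : R) + 2 * γ - 1) * JS γ n j) * F j),
              Finset.sum_range_succ
                (fun j => C (((j : R) + 1) * (((j : R) + 1) + 2 * γ - 1) * JS γ n (j + 1)) * F (j + 1))]
            rw [JS_eq_zero γ n (n + 1) (by omega)]
            push_cast
            simp
          rw [hsecond, ← Finset.sum_add_distrib]
          refine Finset.sum_congr rfl fun j _ => ?_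
          show C (JS γ n j) * F (j + 1) + _ = C (JS γ (n + 1) (j + 1)) * F (j + 1)
          rw [show JS γ (n + 1) (j + 1)
              = JS γ n j + ((j : R) + 1) * (((j : R) + 1) + 2 * γ - 1) * JS γ n (j + 1) from rfl]
          rw [map_add]
          ring
end

section
/- For each fixed j, the formal power series identity ∏_{r=1}^{j} 1/(1 - r(r+2γ-1)x) = Σ_{n≥j} JS(n,j) x^{n-j} holds; equivalently, JS(n,j) is the coefficient of x^{n-j} in ∏_{r=1}^{j} (1 - r(r+2γ-1)x)^{-1}. -/
open PowerSeries

section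

variable {R : Type*} [CommRing R] (γ : R)

theorem JS_succ_succ (n j : ℕ) :
    JS γ (n + 1) (j + 1) =
      JS γ n j + ((j + 1 : ℕ) : R) * (((j + 1 : ℕ) : R) + 2 * γ - 1) * JS γ n (j + 1) := by
  push_cast
  rfl

theorem JS_zero_succ (j : ℕ) : JS γ 0 (j + 1) = 0 := rfl

theorem JS_succ_zero (n : ℕ) : JS γ (n + 1) 0 = 0 := rfl

theorem JS_eq_zero_of_lt {n j : ℕ} (h : n < j) : JS γ n j = 0 := by
  induction n generalizing j with
  | zero =>
    obtain ⟨j, rfl⟩ := Nat.exists_eq_succ_of_ne_zero h.ne'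
    exact JS_zero_succ γ j
  | succ n ih =>
    obtain ⟨j, rfl⟩ := Nat.exists_eq_succ_of_ne_zero (Nat.ne_zero_of_lt h)
    rw [JS_succ_succ, ih (by omega), ih (by omega), mul_zero, add_zero]

theorem one_sub_C_mul_X_mul_mk_JS_succ (j : ℕ) :
    (1 - C (((j + 1 : ℕ) : R) * (((j + 1 : ℕ) : R) + 2 * γ - 1)) * X) *
        mk (fun n => JS γ (n + (j + 1)) (j + 1)) =
      mk (fun n => JS γ (n + j) j) := by
  ext n
  rw [sub_mul, one_mul, mul_assoc, map_sub, coeff_C_mul]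
  cases n with
  | zero =>
    rw [coeff_zero_X_mul, mul_zero, sub_zero, coeff_mk, coeff_mk, zero_add, zero_add,
      JS_succ_succ, JS_eq_zero_of_lt γ (Nat.lt_succ_self j), mul_zero, add_zero]
  | succ n =>
    rw [coeff_succ_X_mul, coeff_mk, coeff_mk, coeff_mk,
      show n + 1 + (j + 1) = n + (j + 1) + 1 by omega, show n + 1 + j = n + (j + 1) by omega,
      JS_succ_succ, add_sub_cancel_right]

theorem mk_JS_zero : mk (fun n => JS γ (n + 0) 0) = 1 := by
  ext (_ | n) <;> rw [coeff_mk, coeff_one]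
  · rfl
  · rw [if_neg n.succ_ne_zero]
    exact JS_succ_zero γ n

end

/-- Rational generating function: `Σ_{n ≥ j} JS(n,j) x^{n-j}` is the multiplicative
inverse of `∏_{r=1}^{j} (1 - r(r+2γ-1)x)` as a formal power series. -/
theorem JS_rational_generating_function {R : Type*} [CommRing R] (γ : R) (j : ℕ) :
    (∏ r ∈ Finset.Icc 1 j,
        (1 - PowerSeries.C ((r : R) * ((r : R) + 2 * γ - 1)) * PowerSeries.X)) *
      PowerSeries.mk (fun n => JS γ (n + j) j) = 1 := by
  induction j with
  | zero => rw [Finset.Icc_eq_empty (by omega), Finset.prod_empty, one_mul, mk_JS_zero]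
  | succ j ih =>
    rw [Finset.prod_Icc_succ_top (Nat.le_add_left 1 j), mul_assoc,
      one_sub_C_mul_X_mul_mk_JS_succ, ih]
end

section
/- For all n ≥ 1, JS(n, n-1) = 2·C(n,3) + 2γ·C(n,2), where C(n,k) denotes the binomial coefficient. -/
lemma JS_eq_zero_of_lt_s6 {R : Type*} [CommRing R] (γ : R) :
    ∀ n j : ℕ, n < j → JS γ n j = 0 := by
  intro n
  induction n with
  | zero => intro j hj; cases j with
    | zero => omega
    | succ j => simp [JS]
  | succ n ih =>
    intro j hj
    cases j with
    | zero => omega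
    | succ j =>
      rw [JS, ih j (by omega), ih (j+1) (by omega)]
      ring

lemma JS_diag {R : Type*} [CommRing R] (γ : R) : ∀ n : ℕ, JS γ n n = 1 := by
  intro n
  induction n with
  | zero => simp [JS]
  | succ n ih =>
    rw [JS, ih, JS_eq_zero_of_lt_s6 γ n (n+1) (by omega)]
    ring

lemma JS_aux {R : Type*} [CommRing R] (γ : R) : ∀ k : ℕ,
    JS γ (k+1) k = 2 * ((k+1).choose 3 : R) + 2 * γ * ((k+1).choose 2 : R) := by
  intro k
  induction k with
  | zero => simp [JS, Nat.choose]
  | succ k ih =>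
    rw [show k + 1 + 1 = (k+1) + 1 from rfl, JS, ih, JS_diag]
    have c3 : ((k+2).choose 3 : R) = ((k+1).choose 3 : R) + ((k+1).choose 2 : R) := by
      rw [show k + 2 = (k+1)+1 from rfl, Nat.choose_succ_succ (k+1) 2]
      push_cast; ring
    have c2 : ((k+2).choose 2 : R) = ((k+1).choose 2 : R) + ((k+1):R) := by
      rw [show k + 2 = (k+1)+1 from rfl, Nat.choose_succ_succ (k+1) 1,
        Nat.choose_one_right]
      push_cast; ring
    have c2' : ((k+1).choose 2 : R) * 2 = ((k+1):R) * ((k:R)) := by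
      have : ∀ m : ℕ, (m+1).choose 2 * 2 = (m+1) * m := by
        intro m
        induction m with
        | zero => rfl
        | succ m ihm => rw [Nat.choose_succ_succ (m+1) 1, Nat.choose_one_right]; nlinarith [ihm]
      calc ((k+1).choose 2 : R) * 2 = (((k+1).choose 2 * 2 : ℕ) : R) := by push_cast; ring
        _ = _ := by rw [this]; push_cast; ring
    rw [c3, c2]
    push_cast
    linear_combination -c2'

/-- For all `n ≥ 1`, `JS(n, n-1) = 2·C(n,3) + 2γ·C(n,2)`. -/
theorem JS_n_pred {R : Type*} [CommRing R] (γ : R) (n : ℕ) (hn : 1 ≤ n) :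
    JS γ n (n - 1) = 2 * (n.choose 3 : R) + 2 * γ * (n.choose 2 : R) := by
  obtain ⟨k, rfl⟩ := Nat.exists_eq_add_of_le hn
  rw [show 1 + k = k + 1 by ring, Nat.add_sub_cancel]
  exact JS_aux γ k
end

section
/- For all n ≥ 0 and j ≥ 0, the Legendre-Stirling number satisfies JS_{γ=1}(n,j) = (1/(2j)!) · Σ_{m=0}^{2j} (-1)^m C(2j,m) ((j-m)(j+1-m))^n. -/
/-- Unnormalized explicit sum. -/
def S (n j : ℕ) : ℚ :=
  ∑ m ∈ Finset.range (2 * j + 1),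
    (-1) ^ m * ((2 * j).choose m : ℚ) * (((j : ℚ) - m) * ((j : ℚ) + 1 - m)) ^ n

lemma Tzero (n j : ℕ) :
    ∑ m ∈ Finset.range (2 * j + 2),
      (-1 : ℚ) ^ m * ((2 * j + 1).choose m : ℚ) * (((j : ℚ) - m) * ((j : ℚ) + 1 - m)) ^ n
      = 0 := by
  set f : ℕ → ℚ := fun m =>
    (-1 : ℚ) ^ m * ((2 * j + 1).choose m : ℚ) * (((j : ℚ) - m) * ((j : ℚ) + 1 - m)) ^ n with hf
  have hrefl := Finset.sum_range_reflect f (2 * j + 2)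
  have hneg : ∀ m ∈ Finset.range (2 * j + 2), f (2 * j + 2 - 1 - m) = - f m := by
    intro m hm
    simp only [Finset.mem_range] at hm
    have hm' : m ≤ 2 * j + 1 := by omega
    have h1 : 2 * j + 2 - 1 - m = 2 * j + 1 - m := by omega
    have hsign : (-1 : ℚ) ^ (2 * j + 1 - m) = - (-1 : ℚ) ^ m := by
      have hadd : (2 * j + 1 - m) + m = 2 * j + 1 := by omega
      have := pow_add (-1 : ℚ) (2 * j + 1 - m) m
      rw [hadd] at this
      have hodd : (-1 : ℚ) ^ (2 * j + 1) = -1 := Odd.neg_one_pow ⟨j, by ring⟩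
      have hsq : (-1 : ℚ) ^ m * (-1 : ℚ) ^ m = 1 := by
        rw [← pow_add]; exact Even.neg_one_pow ⟨m, by ring⟩
      calc (-1 : ℚ) ^ (2 * j + 1 - m)
          = (-1 : ℚ) ^ (2 * j + 1 - m) * ((-1 : ℚ) ^ m * (-1 : ℚ) ^ m) := by rw [hsq, mul_one]
        _ = ((-1 : ℚ) ^ (2 * j + 1 - m) * (-1 : ℚ) ^ m) * (-1 : ℚ) ^ m := by ring
        _ = - (-1 : ℚ) ^ m := by rw [← this, hodd]; ring
    have hchoose : (2 * j + 1).choose (2 * j + 1 - m) = (2 * j + 1).choose m :=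
      Nat.choose_symm hm'
    have hcast : ((2 * j + 1 - m : ℕ) : ℚ) = 2 * (j : ℚ) + 1 - m := by
      push_cast [Nat.cast_sub hm']; ring
    simp only [hf, h1, hsign, hchoose, hcast]
    have hbase : ((j : ℚ) - (2 * (j : ℚ) + 1 - m)) * ((j : ℚ) + 1 - (2 * (j : ℚ) + 1 - m))
        = ((j : ℚ) - m) * ((j : ℚ) + 1 - m) := by ring
    rw [hbase]; ring
  rw [Finset.sum_congr rfl hneg, Finset.sum_neg_distrib] at hrefl
  linarith

lemma choose_id (j m : ℕ) (h : m < 2 * j + 2) :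
    (2 * j + 2).choose (m + 1) * (m + 1) * (2 * j + 2 - m)
      = (2 * j + 2) * (2 * j + 1) * ((2 * j).choose m) + (2 * j + 2) * ((2 * j + 1).choose m) := by
  have h1 : (2 * j + 2).choose (m + 1) * (m + 1) = (2 * j + 2) * (2 * j + 1).choose m :=
    (Nat.add_one_mul_choose_eq (2 * j + 1) m).symm
  have h2 : (2 * j + 1).choose m * (2 * j + 1 - m) = (2 * j + 1) * (2 * j).choose m := by
    have ha := Nat.choose_succ_right_eq (2 * j + 1) m
    have hb : (2 * j + 1) * (2 * j).choose m = (2 * j + 1).choose (m + 1) * (m + 1) :=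
      Nat.add_one_mul_choose_eq (2 * j) m
    rw [hb, ha]
  have h3 : 2 * j + 2 - m = (2 * j + 1 - m) + 1 := by omega
  calc (2 * j + 2).choose (m + 1) * (m + 1) * (2 * j + 2 - m)
      = (2 * j + 2) * ((2 * j + 1).choose m * (2 * j + 1 - m)) + (2 * j + 2) * (2 * j + 1).choose m := by
        rw [h1, h3]; ring
    _ = (2 * j + 2) * (2 * j + 1) * ((2 * j).choose m) + (2 * j + 2) * ((2 * j + 1).choose m) := by
        rw [h2]; ring

lemma S_rec (n j : ℕ) :
    S (n + 1) (j + 1) = (2 * (j : ℚ) + 2) * (2 * (j : ℚ) + 1) * S n j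
      + ((j : ℚ) + 1) * ((j : ℚ) + 2) * S n (j + 1) := by
  have h2 : 2 * (j + 1) = 2 * j + 2 := by ring
  have key : S (n + 1) (j + 1) - ((j : ℚ) + 1) * ((j : ℚ) + 2) * S n (j + 1)
      = (2 * (j : ℚ) + 2) * (2 * (j : ℚ) + 1) * S n j := by
    have step1 : S (n + 1) (j + 1) - ((j : ℚ) + 1) * ((j : ℚ) + 2) * S n (j + 1)
        = ∑ m ∈ Finset.range (2 * j + 3),
            (-1 : ℚ) ^ m * ((2 * j + 2).choose m : ℚ)
              * (((j : ℚ) + 1 - m) * ((j : ℚ) + 2 - m)) ^ n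
              * (-(m : ℚ) * (2 * (j : ℚ) + 3 - m)) := by
      simp only [S, h2, Finset.mul_sum, ← Finset.sum_sub_distrib]
      apply Finset.sum_congr (by norm_num) (fun m hm => ?_)
      push_cast
      ring
    rw [step1, Finset.sum_range_succ']
    simp only [Nat.cast_zero, neg_zero, zero_mul, mul_zero, add_zero]
    have step2 : ∀ m ∈ Finset.range (2 * j + 2),
        (-1 : ℚ) ^ (m + 1) * ((2 * j + 2).choose (m + 1) : ℚ)
            * (((j : ℚ) + 1 - (m + 1 : ℕ)) * ((j : ℚ) + 2 - (m + 1 : ℕ))) ^ n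
            * (-((m + 1 : ℕ) : ℚ) * (2 * (j : ℚ) + 3 - ((m + 1 : ℕ) : ℚ)))
          = (2 * (j : ℚ) + 2) * (2 * (j : ℚ) + 1)
              * ((-1 : ℚ) ^ m * ((2 * j).choose m : ℚ) * (((j : ℚ) - m) * ((j : ℚ) + 1 - m)) ^ n)
            + (2 * (j : ℚ) + 2)
              * ((-1 : ℚ) ^ m * ((2 * j + 1).choose m : ℚ) * (((j : ℚ) - m) * ((j : ℚ) + 1 - m)) ^ n) := by
      intro m hm
      simp only [Finset.mem_range] at hm
      have hc := choose_id j m hm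
      have hcq : ((2 * j + 2).choose (m + 1) : ℚ) * ((m : ℚ) + 1) * (2 * (j : ℚ) + 2 - m)
          = (2 * (j : ℚ) + 2) * (2 * (j : ℚ) + 1) * ((2 * j).choose m : ℚ)
            + (2 * (j : ℚ) + 2) * ((2 * j + 1).choose m : ℚ) := by
        have hsub : ((2 * j + 2 - m : ℕ) : ℚ) = 2 * (j : ℚ) + 2 - m := by
          push_cast [Nat.cast_sub (by omega : m ≤ 2 * j + 2)]; ring
        have := congrArg (fun k : ℕ => (k : ℚ)) hc
        push_cast [hsub] at this
        linarith [this]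
      have hbase : (((j : ℚ) + 1 - ((m : ℚ) + 1)) * ((j : ℚ) + 2 - ((m : ℚ) + 1)))
          = (((j : ℚ) - m) * ((j : ℚ) + 1 - m)) := by ring
      push_cast
      rw [hbase, pow_succ]
      linear_combination ((-1 : ℚ) ^ m * (((j : ℚ) - m) * ((j : ℚ) + 1 - m)) ^ n) * hcq
    rw [Finset.sum_congr rfl step2, Finset.sum_add_distrib, ← Finset.mul_sum, ← Finset.mul_sum,
      Tzero, mul_zero, add_zero]
    have step3 : ∑ m ∈ Finset.range (2 * j + 2),
        (-1 : ℚ) ^ m * ((2 * j).choose m : ℚ) * (((j : ℚ) - m) * ((j : ℚ) + 1 - m)) ^ n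
        = S n j := by
      rw [show 2 * j + 2 = (2 * j + 1) + 1 from rfl, Finset.sum_range_succ,
        Nat.choose_eq_zero_of_lt (by omega)]
      simp [S]
    rw [step3]
  linarith

theorem main_aux : ∀ n j : ℕ, JS (1 : ℚ) n j = (1 / ((2 * j).factorial : ℚ)) * S n j := by
  intro n
  induction n with
  | zero =>
    intro j
    cases j with
    | zero => simp [JS, S]
    | succ k =>
      have hS : S 0 (k + 1) = 0 := by
        have h := Int.alternating_sum_range_choose_of_ne (n := 2 * k + 2) (by omega)
        have : ((∑ i ∈ Finset.range (2 * k + 2 + 1), (-1 : ℤ) ^ i * ((2 * k + 2).choose i) : ℤ) : ℚ)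
            = 0 := by rw [h]; norm_num
        push_cast at this
        simp only [S]
        rw [show 2 * (k + 1) = 2 * k + 2 from by ring]
        simpa using this
      rw [hS, mul_zero]
      simp [JS]
  | succ n ih =>
    intro j
    cases j with
    | zero =>
      simp [JS, S]
    | succ k =>
      have hrec : JS (1 : ℚ) (n + 1) (k + 1)
          = JS (1 : ℚ) n k + ((k : ℚ) + 1) * (((k : ℚ) + 1) + 2 * 1 - 1) * JS (1 : ℚ) n (k + 1) := by
        rw [JS]
      rw [hrec, ih k, ih (k + 1), S_rec n k]
      have hfac : ((2 * (k + 1)).factorial : ℚ)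
          = (2 * (k : ℚ) + 2) * (2 * (k : ℚ) + 1) * ((2 * k).factorial : ℚ) := by
        rw [show 2 * (k + 1) = (2 * k + 1) + 1 from by ring, Nat.factorial_succ,
          Nat.factorial_succ]
        push_cast
        ring
      rw [hfac]
      have h1 : ((2 * k).factorial : ℚ) ≠ 0 := Nat.cast_ne_zero.mpr (Nat.factorial_ne_zero _)
      field_simp
      ring

/-- Explicit formula for the Legendre-Stirling numbers (`γ = 1`). -/
theorem LS_explicit_formula (n j : ℕ) :
    JS (1 : ℚ) n j = (1 / ((2 * j).factorial : ℚ)) *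
      ∑ m ∈ Finset.range (2 * j + 1),
        (-1) ^ m * ((2 * j).choose m : ℚ) * (((j : ℚ) - m) * ((j : ℚ) + 1 - m)) ^ n := by
  exact main_aux n j
end

section
/- For all integers n, m with m ≤ n, Σ_{j=m}^{n} (-1)^{j+m} JS(n,j) · js(j,m) = δ_{n,m}. -/
/-- Signless Jacobi-Stirling numbers of the first kind, defined by the triangular
recurrence and initial conditions. -/
def js {R : Type*} [CommRing R] (γ : R) : ℕ → ℕ → R
  | 0, 0 => 1
  | _ + 1, 0 => 0
  | 0, _ + 1 => 0
  | n + 1, j + 1 => js γ n j + (n : R) * ((n : R) + 2 * γ - 1) * js γ n (j + 1)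

lemma js_eq_zero {R : Type*} [CommRing R] (γ : R) : ∀ n j, n < j → js γ n j = 0 := by
  intro n
  induction n with
  | zero =>
    intro j hj
    obtain ⟨k, rfl⟩ : ∃ k, j = k + 1 := ⟨j - 1, by omega⟩
    simp [js]
  | succ n ih =>
    intro j hj
    obtain ⟨k, rfl⟩ : ∃ k, j = k + 1 := ⟨j - 1, by omega⟩
    rw [js, ih k (by omega), ih (k+1) (by omega)]
    ring

lemma telescope_Icc {R : Type*} [CommRing R] (g : ℕ → R) :
    ∀ n m : ℕ, m ≤ n → ∑ j ∈ Finset.Icc m n, (g j - g (j+1)) = g m - g (n+1) := by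
  intro n
  induction n with
  | zero => intro m hm; interval_cases m; simp
  | succ n ih =>
    intro m hm
    rw [Finset.sum_Icc_succ_top hm]
    rcases Nat.lt_or_ge m (n+1) with h | h
    · rw [ih m (by omega)]; ring
    · have : m = n + 1 := by omega
      subst this
      simp

lemma JS_step {R : Type*} [CommRing R] (γ : R) (n m : ℕ) (h : m ≤ n) :
    ∑ j ∈ Finset.Icc (m+1) (n+1), (-1 : R) ^ (j + (m+1)) * JS γ (n+1) j * js γ j (m+1) =
      ∑ j ∈ Finset.Icc m n, (-1 : R) ^ (j + m) * JS γ n j * js γ j m := by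
  have hmap : Finset.Icc (m+1) (n+1) = (Finset.Icc m n).map (addRightEmbedding 1) := by
    rw [Finset.map_add_right_Icc]
  rw [hmap, Finset.sum_map]
  set g : ℕ → R := fun j => (-1 : R)^(j+m) * ((j:R) * ((j:R)+2*γ-1)) * JS γ n j * js γ j (m+1)
    with hg
  have key : ∀ j ∈ Finset.Icc m n,
      (-1 : R) ^ (addRightEmbedding 1 j + (m+1)) * JS γ (n+1) (addRightEmbedding 1 j) *
        js γ (addRightEmbedding 1 j) (m+1) =
      (-1 : R) ^ (j + m) * JS γ n j * js γ j m + (g j - g (j+1)) := by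
    intro j _
    simp only [addRightEmbedding_apply, hg]
    rw [show j + 1 + (m + 1) = (j + m) + 2 by ring, show j + 1 + m = (j + m) + 1 by ring,
      JS, js]
    push_cast
    ring
  rw [Finset.sum_congr rfl key, Finset.sum_add_distrib, telescope_Icc g n m h, hg]
  simp [js_eq_zero γ m (m+1) (by omega), JS_eq_zero γ n (n+1) (by omega)]

/-- Biorthogonality of the Jacobi-Stirling numbers of the second and first kinds. -/
theorem JS_biorthogonality_second {R : Type*} [CommRing R] (γ : R) (n m : ℕ) (h : m ≤ n) :
    ∑ j ∈ Finset.Icc m n, (-1 : R) ^ (j + m) * JS γ n j * js γ j m =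
      if n = m then 1 else 0 := by
  induction n generalizing m with
  | zero =>
    interval_cases m
    simp [JS, js]
  | succ n ih =>
    match m with
    | 0 =>
      rw [if_neg (by omega)]
      apply Finset.sum_eq_zero
      intro j hj
      match j with
      | 0 => simp [JS]
      | k + 1 => simp [js]
    | m + 1 =>
      rw [JS_step γ n m (by omega), ih m (by omega)]
      simp only [Nat.succ.injEq]
end

section
/- For all natural numbers n, j, γ, the Jacobi-Stirling number JS_γ(n,j) equals the number of Jacobi-Stirling set partitions of the multiset [n]₂ = {1₁,1₂,...,n₁,n₂} into γ zero blocks and j nonzero blocks. -/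
/-- A Jacobi-Stirling set partition of `[n]₂` (modelled as `Fin n × Bool`, where
`(i, false)` and `(i, true)` are the two copies of the number `i`) into `γ`
distinguishable, possibly empty zero blocks and `j` indistinguishable nonempty
nonzero blocks. -/
structure JSPartition (n j γ : ℕ) where
  /-- The `γ` distinguishable zero blocks. -/
  zero : Fin γ → Finset (Fin n × Bool)
  /-- The set of nonzero blocks. -/
  nonzero : Finset (Finset (Fin n × Bool))
  /-- There are `j` nonzero blocks. -/
  card_nonzero : nonzero.card = j
  /-- Nonzero blocks are nonempty. -/
  nonzero_nonempty : ∀ b ∈ nonzero, b.Nonempty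
  /-- Distinct zero blocks are disjoint. -/
  zero_disjoint : ∀ a b : Fin γ, a ≠ b → Disjoint (zero a) (zero b)
  /-- Zero blocks are disjoint from nonzero blocks. -/
  zero_nonzero_disjoint : ∀ a : Fin γ, ∀ b ∈ nonzero, Disjoint (zero a) b
  /-- Distinct nonzero blocks are disjoint. -/
  nonzero_disjoint : ∀ b ∈ nonzero, ∀ b' ∈ nonzero, b ≠ b' → Disjoint b b'
  /-- The blocks cover `[n]₂`. -/
  cover : ∀ x : Fin n × Bool, (∃ a, x ∈ zero a) ∨ (∃ b ∈ nonzero, x ∈ b)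
  /-- The union of the zero blocks contains at most one copy of each number. -/
  zero_no_both : ∀ i : Fin n,
    ¬ ((∃ a, (i, false) ∈ zero a) ∧ (∃ a, (i, true) ∈ zero a))
  /-- Each nonzero block contains both copies of its smallest element, but not both
  copies of any other element. -/
  nonzero_min : ∀ b ∈ nonzero, ∃ m : Fin n,
    (m, false) ∈ b ∧ (m, true) ∈ b ∧ (∀ x ∈ b, m ≤ x.1) ∧
      (∀ i : Fin n, (i, false) ∈ b → (i, true) ∈ b → i = m)

open Finset

section Blocks

variable {n : ℕ}

def extendBlock (S : Finset Bool) (s : Finset (Fin n × Bool)) : Finset (Fin (n + 1) × Bool) :=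
  s.map (Fin.castSuccEmb.prodMap (.refl Bool)) ∪ S.map ⟨(Fin.last n, ·), Prod.mk_right_injective _⟩

def restrictBlock (t : Finset (Fin (n + 1) × Bool)) : Finset (Fin n × Bool) :=
  univ.filter fun x => (x.1.castSucc, x.2) ∈ t

def lastCopies (t : Finset (Fin (n + 1) × Bool)) : Finset Bool :=
  univ.filter fun c => (Fin.last n, c) ∈ t

def lastPair : Finset (Fin (n + 1) × Bool) := extendBlock univ ∅

@[simp] lemma castSucc_mem_extendBlock {S : Finset Bool} {s : Finset (Fin n × Bool)}
    {i : Fin n} {c : Bool} : (i.castSucc, c) ∈ extendBlock S s ↔ (i, c) ∈ s := by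
  simp [extendBlock, eq_comm (a := Fin.last n), Fin.castSucc_ne_last]

@[simp] lemma last_mem_extendBlock {S : Finset Bool} {s : Finset (Fin n × Bool)} {c : Bool} :
    (Fin.last n, c) ∈ extendBlock S s ↔ c ∈ S := by
  simp [extendBlock, Fin.castSucc_ne_last]

@[simp] lemma mem_restrictBlock {t : Finset (Fin (n + 1) × Bool)} {x : Fin n × Bool} :
    x ∈ restrictBlock t ↔ (x.1.castSucc, x.2) ∈ t := by
  simp [restrictBlock]

@[simp] lemma mem_lastCopies {t : Finset (Fin (n + 1) × Bool)} {c : Bool} :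
    c ∈ lastCopies t ↔ (Fin.last n, c) ∈ t := by
  simp [lastCopies]

@[simp] lemma restrictBlock_extendBlock (S : Finset Bool) (s : Finset (Fin n × Bool)) :
    restrictBlock (extendBlock S s) = s := by
  ext; simp

@[simp] lemma lastCopies_extendBlock (S : Finset Bool) (s : Finset (Fin n × Bool)) :
    lastCopies (extendBlock S s) = S := by
  ext; simp

lemma extendBlock_eq_iff {S : Finset Bool} {s : Finset (Fin n × Bool)}
    {t : Finset (Fin (n + 1) × Bool)} :
    extendBlock S s = t ↔ S = lastCopies t ∧ s = restrictBlock t := by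
  constructor
  · rintro rfl; simp
  · rintro ⟨rfl, rfl⟩
    ext ⟨i, c⟩
    induction i using Fin.lastCases <;> simp

lemma disjoint_extendBlock {S S' : Finset Bool} {s s' : Finset (Fin n × Bool)} :
    Disjoint (extendBlock S s) (extendBlock S' s') ↔ Disjoint S S' ∧ Disjoint s s' := by
  simp only [disjoint_left, Prod.forall, Fin.forall_fin_succ', castSucc_mem_extendBlock,
    last_mem_extendBlock]
  tauto

lemma disjoint_restrictBlock {t t' : Finset (Fin (n + 1) × Bool)} (h : Disjoint t t') :
    Disjoint (restrictBlock t) (restrictBlock t') :=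
  disjoint_left.2 fun _ hx hx' =>
    disjoint_left.1 h (mem_restrictBlock.1 hx) (mem_restrictBlock.1 hx')

@[simp] lemma mem_lastPair {y : Fin (n + 1) × Bool} : y ∈ lastPair ↔ y.1 = Fin.last n := by
  obtain ⟨i, c⟩ := y
  induction i using Fin.lastCases <;> simp [lastPair, Fin.castSucc_ne_last]

lemma lastCopies_eq_empty_iff {t : Finset (Fin (n + 1) × Bool)} :
    lastCopies t = ∅ ↔ Disjoint t lastPair := by
  simp [eq_empty_iff_forall_notMem, disjoint_right, Bool.forall_bool, forall_and]

lemma extendBlock_restrictBlock_of_disjoint {t : Finset (Fin (n + 1) × Bool)}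
    (h : Disjoint t lastPair) : extendBlock ∅ (restrictBlock t) = t :=
  extendBlock_eq_iff.2 ⟨(lastCopies_eq_empty_iff.2 h).symm, rfl⟩

lemma extendBlock_empty_ne_lastPair (s : Finset (Fin n × Bool)) : extendBlock ∅ s ≠ lastPair :=
  fun h => univ_neq_empty Bool <| by
    simpa only [lastPair, lastCopies_extendBlock] using (congrArg lastCopies h).symm

lemma lastPair_notMem_image_extendBlock_empty (N : Finset (Finset (Fin n × Bool))) :
    lastPair ∉ N.image (extendBlock ∅) := by
  simpa using fun b _ => extendBlock_empty_ne_lastPair b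

def IsNonzeroBlock (b : Finset (Fin n × Bool)) : Prop :=
  ∃ m : Fin n, (m, false) ∈ b ∧ (m, true) ∈ b ∧ (∀ x ∈ b, m ≤ x.1) ∧
    ∀ i : Fin n, (i, false) ∈ b → (i, true) ∈ b → i = m

lemma IsNonzeroBlock.nonempty {b : Finset (Fin n × Bool)} (hb : IsNonzeroBlock b) :
    b.Nonempty :=
  let ⟨_, hm, _⟩ := hb; ⟨_, hm⟩

lemma isNonzeroBlock_lastPair : IsNonzeroBlock (lastPair : Finset (Fin (n + 1) × Bool)) :=
  ⟨Fin.last n, by simp, by simp, fun _ hx => (mem_lastPair.1 hx).ge,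
    fun _ hi _ => mem_lastPair.1 hi⟩

lemma IsNonzeroBlock.extendBlock {s : Finset (Fin n × Bool)} (hs : IsNonzeroBlock s)
    {S : Finset Bool} (hS : S ≠ univ) : IsNonzeroBlock (extendBlock S s) := by
  obtain ⟨m, hm₀, hm₁, hmin, hboth⟩ := hs
  refine ⟨m.castSucc, by simpa, by simpa, ?_, fun i => ?_⟩
  · rintro ⟨i, c⟩ hx
    induction i using Fin.lastCases with
    | last => exact (Fin.castSucc_lt_last m).le
    | cast i => exact Fin.castSucc_le_castSucc_iff.2 (hmin _ (castSucc_mem_extendBlock.1 hx))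
  · induction i using Fin.lastCases with
    | last =>
      intro h₀ h₁
      have hS_univ : S = univ :=
        eq_univ_of_forall (Bool.forall_bool.2 ⟨by simpa using h₀, by simpa using h₁⟩)
      exact (hS hS_univ).elim
    | cast i =>
      simp only [castSucc_mem_extendBlock, Fin.castSucc_inj]
      exact hboth i

lemma IsNonzeroBlock.eq_lastPair {t : Finset (Fin (n + 1) × Bool)} (ht : IsNonzeroBlock t)
    (h₀ : (Fin.last n, false) ∈ t) (h₁ : (Fin.last n, true) ∈ t) : t = lastPair := by
  obtain ⟨m, -, -, hmin, hboth⟩ := ht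
  obtain rfl := hboth _ h₀ h₁
  ext ⟨i, c⟩
  refine ⟨fun hx => mem_lastPair.2 (Fin.last_le_iff.1 (hmin _ hx)), fun hx => ?_⟩
  obtain rfl : i = Fin.last n := mem_lastPair.1 hx
  cases c <;> assumption

lemma IsNonzeroBlock.restrictBlock {t : Finset (Fin (n + 1) × Bool)} (ht : IsNonzeroBlock t)
    (hne : t ≠ lastPair) : IsNonzeroBlock (restrictBlock t) := by
  obtain ⟨m, hm₀, hm₁, hmin, hboth⟩ := ht
  induction m using Fin.lastCases with
  | last => exact absurd (IsNonzeroBlock.eq_lastPair ⟨_, hm₀, hm₁, hmin, hboth⟩ hm₀ hm₁) hne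
  | cast m =>
    refine ⟨m, by simpa, by simpa, fun x hx => ?_, fun i h₀ h₁ => ?_⟩
    · exact Fin.castSucc_le_castSucc_iff.1 (hmin _ (mem_restrictBlock.1 hx))
    · exact Fin.castSucc_injective _ (hboth _ (mem_restrictBlock.1 h₀) (mem_restrictBlock.1 h₁))

end Blocks

section Placements

variable {γ : ℕ} {α : Type*} [DecidableEq α]

-- `f c` is the block that receives copy `c` of a new largest number: the zero block `inl a`,
-- or the nonzero block `inr b` with `b ∈ N`.
def IsPlacement (N : Finset α) (f : Bool → Fin γ ⊕ α) : Prop :=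
  f false ≠ f true ∧ (∃ c, (f c).isRight) ∧ ∀ c b, f c = .inr b → b ∈ N

lemma card_isPlacement (N : Finset α) :
    Nat.card {f : Bool → Fin γ ⊕ α // IsPlacement N f} = #N * (#N + 2 * γ - 1) := by
  -- ordered pairs of distinct slots, except those of two distinct zero blocks
  set slots := (univ : Finset (Fin γ)).disjSum N
  set zeroSlots := (univ : Finset (Fin γ)).disjSum (∅ : Finset α)
  have hsub : zeroSlots.offDiag ⊆ slots.offDiag :=
    offDiag_mono (disjSum_mono subset_rfl (empty_subset _))
  have e : {f // IsPlacement N f} ≃ {x // x ∈ slots.offDiag \ zeroSlots.offDiag} :=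
    (Equiv.boolArrowEquivProd _).subtypeEquiv fun f => by
      simp only [IsPlacement, Equiv.boolArrowEquivProd_apply, mem_sdiff, mem_offDiag, slots,
        zeroSlots, Bool.exists_bool, Bool.forall_bool]
      rcases f false with a | a <;> rcases f true with b | b <;> simp [and_comm, and_left_comm]
  have hle := card_le_card hsub
  rw [Nat.card_congr e, Nat.card_eq_finsetCard, card_sdiff_of_subset hsub]
  simp only [slots, zeroSlots, offDiag_card, card_disjSum, card_univ, Fintype.card_fin,
    card_empty, add_zero] at hle ⊢
  rcases (#N).eq_zero_or_pos with hN | hN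
  · simp [hN]
  · zify [hle, Nat.le_mul_self γ, Nat.le_mul_self (γ + #N), show 1 ≤ #N + 2 * γ by omega]
    ring

lemma IsPlacement.filter_eq_inr_ne_univ {N : Finset α} {f : Bool → Fin γ ⊕ α}
    (hf : IsPlacement N f) (b : α) : ({c | f c = .inr b} : Finset Bool) ≠ univ := fun h => by
  have hall : ∀ c, f c = .inr b := fun c => by simpa using h.ge (mem_univ c)
  exact hf.1 ((hall false).trans (hall true).symm)

end Placements

namespace JSPartition

variable {n j k γ : ℕ}

@[ext] lemma ext {p q : JSPartition n j γ} (hzero : p.zero = q.zero)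
    (hnonzero : p.nonzero = q.nonzero) : p = q := by
  cases p; cases q; cases hzero; cases hnonzero; rfl

instance : Finite (JSPartition n j γ) :=
  .of_injective (fun p => (p.zero, p.nonzero)) fun _ _ h =>
    ext (congrArg Prod.fst h) (congrArg Prod.snd h)

instance : Unique (JSPartition 0 0 γ) where
  default :=
    { zero := fun _ => ∅
      nonzero := ∅
      card_nonzero := rfl
      nonzero_nonempty := by simp
      zero_disjoint := by simp
      zero_nonzero_disjoint := by simp
      nonzero_disjoint := by simp
      cover := fun x => x.1.elim0
      zero_no_both := fun i => i.elim0
      nonzero_min := by simp }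
  uniq p := by
    ext1
    · funext a
      exact eq_empty_of_forall_notMem fun x _ => x.1.elim0
    · simpa using p.card_nonzero

instance : IsEmpty (JSPartition 0 (j + 1) γ) where
  false p := by
    obtain ⟨b, hb⟩ : p.nonzero.Nonempty := by
      rw [← card_pos, p.card_nonzero]; exact j.succ_pos
    obtain ⟨x, -⟩ := p.nonzero_nonempty b hb
    exact x.1.elim0

instance : IsEmpty (JSPartition (n + 1) 0 γ) where
  false p := by
    have hnonzero : p.nonzero = ∅ := card_eq_zero.1 p.card_nonzero
    refine p.zero_no_both 0 ⟨?_, ?_⟩ <;>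
      simpa [hnonzero] using p.cover _

lemma isNonzeroBlock (p : JSPartition n j γ) {b : Finset (Fin n × Bool)} (hb : b ∈ p.nonzero) :
    IsNonzeroBlock b :=
  p.nonzero_min b hb

lemma eq_of_mem_zero (p : JSPartition n j γ) {y : Fin n × Bool} {a a' : Fin γ}
    (h : y ∈ p.zero a) (h' : y ∈ p.zero a') : a = a' :=
  by_contra fun hne => disjoint_left.1 (p.zero_disjoint a a' hne) h h'

lemma eq_of_mem_nonzero (p : JSPartition n j γ) {y : Fin n × Bool}
    {b b' : Finset (Fin n × Bool)} (hb : b ∈ p.nonzero) (hb' : b' ∈ p.nonzero)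
    (h : y ∈ b) (h' : y ∈ b') : b = b' :=
  by_contra fun hne => disjoint_left.1 (p.nonzero_disjoint b hb b' hb' hne) h h'

lemma notMem_zero_of_mem_nonzero (p : JSPartition n j γ) {y : Fin n × Bool} {a : Fin γ}
    {b : Finset (Fin n × Bool)} (hb : b ∈ p.nonzero) (h : y ∈ b) : y ∉ p.zero a :=
  fun h' => disjoint_left.1 (p.zero_nonzero_disjoint a b hb) h' h

noncomputable def blockOf (p : JSPartition n j γ) (y : Fin n × Bool) :
    Fin γ ⊕ Finset (Fin n × Bool) :=
  if h : ∃ a, y ∈ p.zero a then .inl h.choose else .inr ((p.cover y).resolve_left h).choose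

lemma blockOf_eq_inl_iff (p : JSPartition n j γ) {y : Fin n × Bool} {a : Fin γ} :
    p.blockOf y = .inl a ↔ y ∈ p.zero a := by
  unfold blockOf
  split_ifs with h
  · exact ⟨fun he => Sum.inl_injective he ▸ h.choose_spec,
      fun hy => congrArg _ (p.eq_of_mem_zero h.choose_spec hy)⟩
  · exact ⟨nofun, fun hy => (h ⟨a, hy⟩).elim⟩

lemma blockOf_eq_inr_iff (p : JSPartition n j γ) {y : Fin n × Bool}
    {b : Finset (Fin n × Bool)} (hb : b ∈ p.nonzero) : p.blockOf y = .inr b ↔ y ∈ b := by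
  unfold blockOf
  split_ifs with h
  · obtain ⟨a, ha⟩ := h
    exact ⟨nofun, fun hy => (p.notMem_zero_of_mem_nonzero hb hy ha).elim⟩
  · obtain ⟨hmem, hy⟩ := ((p.cover y).resolve_left h).choose_spec
    exact ⟨fun he => Sum.inr_injective he ▸ hy,
      fun hy' => congrArg _ (p.eq_of_mem_nonzero hmem hb hy hy')⟩

def addLastPair (q : JSPartition n j γ) : JSPartition (n + 1) (j + 1) γ where
  zero a := extendBlock ∅ (q.zero a)
  nonzero := insert lastPair (q.nonzero.image (extendBlock ∅))
  card_nonzero := by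
    rw [card_insert_of_notMem (lastPair_notMem_image_extendBlock_empty _),
      card_image_of_injective _ fun s s' h => by simpa using congrArg restrictBlock h,
      q.card_nonzero]
  nonzero_nonempty := by
    simp only [forall_mem_insert, forall_mem_image]
    exact ⟨isNonzeroBlock_lastPair.nonempty,
      fun b hb => ((q.isNonzeroBlock hb).extendBlock (univ_neq_empty Bool).symm).nonempty⟩
  zero_disjoint a a' h := disjoint_extendBlock.2 ⟨disjoint_empty_left _, q.zero_disjoint a a' h⟩
  zero_nonzero_disjoint a := by
    simp only [forall_mem_insert, forall_mem_image, lastPair, disjoint_extendBlock]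
    exact ⟨⟨disjoint_empty_left _, disjoint_empty_right _⟩,
      fun b hb => ⟨disjoint_empty_left _, q.zero_nonzero_disjoint a b hb⟩⟩
  nonzero_disjoint := by
    simp only [forall_mem_insert, forall_mem_image, lastPair, disjoint_extendBlock]
    refine ⟨⟨nofun, fun b _ _ => ⟨disjoint_empty_right _, disjoint_empty_left _⟩⟩,
      fun b hb => ⟨fun _ => ⟨disjoint_empty_left _, disjoint_empty_right _⟩,
        fun b' hb' hne =>
          ⟨disjoint_empty_left _, q.nonzero_disjoint b hb b' hb' (ne_of_apply_ne _ hne)⟩⟩⟩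
  cover := by
    rintro ⟨i, c⟩
    induction i using Fin.lastCases with
    | last => exact .inr ⟨lastPair, mem_insert_self _ _, by simp⟩
    | cast i =>
      rcases q.cover (i, c) with ⟨a, ha⟩ | ⟨b, hb, hib⟩
      · exact .inl ⟨a, by simpa using ha⟩
      · exact .inr ⟨extendBlock ∅ b, mem_insert_of_mem (mem_image_of_mem _ hb), by simpa⟩
  zero_no_both i := by
    induction i using Fin.lastCases with
    | last => simp
    | cast i => simpa using q.zero_no_both i
  nonzero_min := by
    simp only [forall_mem_insert, forall_mem_image]
    exact ⟨isNonzeroBlock_lastPair,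
      fun b hb => (q.isNonzeroBlock hb).extendBlock (univ_neq_empty Bool).symm⟩

lemma restrictBlock_injOn (p : JSPartition (n + 1) j γ) :
    Set.InjOn restrictBlock (p.nonzero.erase lastPair : Set (Finset (Fin (n + 1) × Bool))) := by
  intro b hb b' hb' h
  simp only [coe_erase, Set.mem_sdiff, mem_coe, Set.mem_singleton_iff] at hb hb'
  by_contra hne
  obtain ⟨x, hx⟩ := ((p.isNonzeroBlock hb.1).restrictBlock hb.2).nonempty
  exact disjoint_left.1 (disjoint_restrictBlock (p.nonzero_disjoint b hb.1 b' hb'.1 hne)) hx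
    (h ▸ hx)

def restrictLast (p : JSPartition (n + 1) j γ) (hk : #(p.nonzero.erase lastPair) = k) :
    JSPartition n k γ where
  zero a := restrictBlock (p.zero a)
  nonzero := (p.nonzero.erase lastPair).image restrictBlock
  card_nonzero := by rw [card_image_of_injOn p.restrictBlock_injOn, hk]
  nonzero_nonempty := forall_mem_image.2 fun b hb =>
    ((p.isNonzeroBlock (mem_of_mem_erase hb)).restrictBlock (ne_of_mem_erase hb)).nonempty
  zero_disjoint a a' h := disjoint_restrictBlock (p.zero_disjoint a a' h)
  zero_nonzero_disjoint a := forall_mem_image.2 fun b hb =>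
    disjoint_restrictBlock (p.zero_nonzero_disjoint a b (mem_of_mem_erase hb))
  nonzero_disjoint := forall_mem_image.2 fun b hb => forall_mem_image.2 fun b' hb' hne =>
    disjoint_restrictBlock <| p.nonzero_disjoint b (mem_of_mem_erase hb) b'
      (mem_of_mem_erase hb') (ne_of_apply_ne _ hne)
  cover x := by
    rcases p.cover (x.1.castSucc, x.2) with ⟨a, ha⟩ | ⟨b, hb, hxb⟩
    · exact .inl ⟨a, mem_restrictBlock.2 ha⟩
    · refine .inr ⟨restrictBlock b, mem_image_of_mem _ (mem_erase.2 ⟨?_, hb⟩),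
        mem_restrictBlock.2 hxb⟩
      rintro rfl
      simp [Fin.castSucc_ne_last] at hxb
  zero_no_both i := by simpa using p.zero_no_both i.castSucc
  nonzero_min := forall_mem_image.2 fun b hb =>
    (p.isNonzeroBlock (mem_of_mem_erase hb)).restrictBlock (ne_of_mem_erase hb)

def removeLastPair (p : JSPartition (n + 1) (j + 1) γ) (hp : lastPair ∈ p.nonzero) :
    JSPartition n j γ :=
  p.restrictLast <| by rw [card_erase_of_mem hp, p.card_nonzero, Nat.add_sub_cancel]

def eraseLast (p : JSPartition (n + 1) j γ) (hp : lastPair ∉ p.nonzero) : JSPartition n j γ :=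
  p.restrictLast <| by rw [erase_eq_of_notMem hp, p.card_nonzero]

def insertLast (q : JSPartition n j γ) (f : Bool → Fin γ ⊕ Finset (Fin n × Bool))
    (hf : IsPlacement q.nonzero f) : JSPartition (n + 1) j γ where
  zero a := extendBlock {c | f c = .inl a} (q.zero a)
  nonzero := q.nonzero.image fun b => extendBlock {c | f c = .inr b} b
  card_nonzero := by
    rw [card_image_of_injective _ fun b b' h => by simpa using congrArg restrictBlock h,
      q.card_nonzero]
  nonzero_nonempty := forall_mem_image.2 fun b hb =>
    ((q.isNonzeroBlock hb).extendBlock (hf.filter_eq_inr_ne_univ b)).nonempty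
  zero_disjoint a a' h := disjoint_extendBlock.2
    ⟨disjoint_filter.2 fun _ _ h₁ h₂ => h (Sum.inl_injective (h₁.symm.trans h₂)),
      q.zero_disjoint a a' h⟩
  zero_nonzero_disjoint a := forall_mem_image.2 fun b hb => disjoint_extendBlock.2
    ⟨disjoint_filter.2 fun _ _ h₁ h₂ => Sum.inl_ne_inr (h₁.symm.trans h₂),
      q.zero_nonzero_disjoint a b hb⟩
  nonzero_disjoint := forall_mem_image.2 fun b hb => forall_mem_image.2 fun b' hb' hne =>
    have hbb' : b ≠ b' := by rintro rfl; exact hne rfl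
    disjoint_extendBlock.2
      ⟨disjoint_filter.2 fun _ _ h₁ h₂ => hbb' (Sum.inr_injective (h₁.symm.trans h₂)),
        q.nonzero_disjoint b hb b' hb' hbb'⟩
  cover := by
    rintro ⟨i, c⟩
    induction i using Fin.lastCases with
    | last =>
      rcases hfc : f c with a | b
      · exact .inl ⟨a, by simpa using hfc⟩
      · exact .inr ⟨_, mem_image_of_mem _ (hf.2.2 c b hfc), by simpa using hfc⟩
    | cast i =>
      rcases q.cover (i, c) with ⟨a, ha⟩ | ⟨b, hb, hib⟩
      · exact .inl ⟨a, by simpa using ha⟩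
      · exact .inr ⟨_, mem_image_of_mem _ hb, by simpa using hib⟩
  zero_no_both i := by
    induction i using Fin.lastCases with
    | last =>
      rintro ⟨⟨a, ha⟩, ⟨a', ha'⟩⟩
      obtain ⟨c, hc⟩ := hf.2.1
      cases c <;> simp_all
    | cast i => simpa using q.zero_no_both i
  nonzero_min := forall_mem_image.2 fun b hb =>
    (q.isNonzeroBlock hb).extendBlock (hf.filter_eq_inr_ne_univ b)

noncomputable def placementOf (p : JSPartition (n + 1) j γ) :
    Bool → Fin γ ⊕ Finset (Fin n × Bool) :=
  fun c => (p.blockOf (Fin.last n, c)).map id restrictBlock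

lemma placementOf_eq_inl_iff (p : JSPartition (n + 1) j γ) {c : Bool} {a : Fin γ} :
    p.placementOf c = .inl a ↔ (Fin.last n, c) ∈ p.zero a := by
  rw [← blockOf_eq_inl_iff, placementOf]
  cases p.blockOf (Fin.last n, c) <;> simp

lemma placementOf_eq_inr_iff (p : JSPartition (n + 1) j γ) (hp : lastPair ∉ p.nonzero)
    {c : Bool} {b : Finset (Fin (n + 1) × Bool)} (hb : b ∈ p.nonzero) :
    p.placementOf c = .inr (restrictBlock b) ↔ (Fin.last n, c) ∈ b := by
  refine ⟨fun h => ?_, fun h => by rw [placementOf, (p.blockOf_eq_inr_iff hb).2 h]; rfl⟩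
  rcases p.cover (Fin.last n, c) with ⟨a, ha⟩ | ⟨b', hb', hcb'⟩
  · rw [← placementOf_eq_inl_iff] at ha
    simp [ha] at h
  · rw [placementOf, (p.blockOf_eq_inr_iff hb').2 hcb', Sum.map_inr, Sum.inr.injEq] at h
    rwa [← p.restrictBlock_injOn (by simp [hb', ne_of_mem_of_not_mem hb' hp])
      (by simp [hb, ne_of_mem_of_not_mem hb hp]) h]

lemma isPlacement_placementOf (p : JSPartition (n + 1) j γ) (hp : lastPair ∉ p.nonzero) :
    IsPlacement (p.eraseLast hp).nonzero p.placementOf := by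
  have hcases (c : Bool) :
      (∃ a, p.placementOf c = .inl a ∧ (Fin.last n, c) ∈ p.zero a) ∨
        ∃ b ∈ p.nonzero, p.placementOf c = .inr (restrictBlock b) ∧ (Fin.last n, c) ∈ b :=
    (p.cover _).imp (fun ⟨a, ha⟩ => ⟨a, p.placementOf_eq_inl_iff.2 ha, ha⟩)
      fun ⟨b, hb, h⟩ => ⟨b, hb, (p.placementOf_eq_inr_iff hp hb).2 h, h⟩
  refine ⟨fun h => ?_, ?_, fun c s hs => ?_⟩
  · rcases hcases false with ⟨a, ha, h₀⟩ | ⟨b, hb, hb', h₀⟩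
    · exact p.zero_no_both _ ⟨⟨a, h₀⟩, a, p.placementOf_eq_inl_iff.1 (h ▸ ha)⟩
    · have h₁ := (p.placementOf_eq_inr_iff hp hb).1 (h ▸ hb')
      exact hp ((p.isNonzeroBlock hb).eq_lastPair h₀ h₁ ▸ hb)
  · rcases hcases false with ⟨a, -, h₀⟩ | ⟨b, -, hb, -⟩
    · rcases hcases true with ⟨a', -, h₁⟩ | ⟨b, -, hb, -⟩
      · exact (p.zero_no_both _ ⟨⟨a, h₀⟩, a', h₁⟩).elim
      · exact ⟨true, by simp [hb]⟩
    · exact ⟨false, by simp [hb]⟩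
  · rcases hcases c with ⟨a, ha, -⟩ | ⟨b, hb, hb', -⟩
    · simp [ha] at hs
    · obtain rfl : restrictBlock b = s := Sum.inr_injective (hb'.symm.trans hs)
      exact mem_image_of_mem _ (mem_erase.2 ⟨ne_of_mem_of_not_mem hb hp, hb⟩)

lemma lastPair_notMem_nonzero_insertLast (q : JSPartition n j γ)
    (f : Bool → Fin γ ⊕ Finset (Fin n × Bool)) (hf : IsPlacement q.nonzero f) :
    lastPair ∉ (q.insertLast f hf).nonzero := by
  intro h
  obtain ⟨b, hb, he⟩ := mem_image.1 h
  have hb_empty : b = ∅ := by simpa [lastPair] using congrArg restrictBlock he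
  exact (q.isNonzeroBlock hb).nonempty.ne_empty hb_empty

lemma removeLastPair_addLastPair (q : JSPartition n j γ) (hq : lastPair ∈ q.addLastPair.nonzero) :
    q.addLastPair.removeLastPair hq = q := by
  ext1
  · funext a
    exact restrictBlock_extendBlock _ _
  · change ((insert lastPair (q.nonzero.image (extendBlock ∅))).erase lastPair).image
      restrictBlock = q.nonzero
    rw [erase_insert (lastPair_notMem_image_extendBlock_empty _), image_image]
    simp [Function.comp_def]

lemma addLastPair_removeLastPair (p : JSPartition (n + 1) (j + 1) γ) (hp : lastPair ∈ p.nonzero) :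
    (p.removeLastPair hp).addLastPair = p := by
  ext1
  · funext a
    exact extendBlock_restrictBlock_of_disjoint (p.zero_nonzero_disjoint a _ hp)
  · change insert lastPair (((p.nonzero.erase lastPair).image restrictBlock).image
      (extendBlock ∅)) = p.nonzero
    rw [image_image, image_congr (g := id) fun b hb => ?_, image_id, insert_erase hp]
    obtain ⟨hne, hb⟩ := mem_erase.1 hb
    exact extendBlock_restrictBlock_of_disjoint (p.nonzero_disjoint _ hb _ hp hne)

lemma eraseLast_insertLast (q : JSPartition n j γ)
    (f : Bool → Fin γ ⊕ Finset (Fin n × Bool)) (hf : IsPlacement q.nonzero f) :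
    (q.insertLast f hf).eraseLast (q.lastPair_notMem_nonzero_insertLast f hf) = q := by
  ext1
  · funext a
    exact restrictBlock_extendBlock _ _
  · change (((q.insertLast f hf).nonzero).erase lastPair).image restrictBlock = q.nonzero
    rw [erase_eq_of_notMem (q.lastPair_notMem_nonzero_insertLast f hf)]
    simp [insertLast, image_image, Function.comp_def]

lemma placementOf_insertLast (q : JSPartition n j γ)
    (f : Bool → Fin γ ⊕ Finset (Fin n × Bool)) (hf : IsPlacement q.nonzero f) :
    (q.insertLast f hf).placementOf = f := by
  funext c
  rcases hfc : f c with a | b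
  · exact placementOf_eq_inl_iff _ |>.2 (by simpa [insertLast] using hfc)
  · have hb := mem_image_of_mem (fun b => extendBlock {c | f c = .inr b} b) (hf.2.2 c b hfc)
    simpa using ((q.insertLast f hf).placementOf_eq_inr_iff
      (q.lastPair_notMem_nonzero_insertLast f hf) hb).2 (by simpa using hfc)

lemma insertLast_eraseLast (p : JSPartition (n + 1) j γ) (hp : lastPair ∉ p.nonzero) :
    (p.eraseLast hp).insertLast p.placementOf (p.isPlacement_placementOf hp) = p := by
  ext1
  · funext a
    exact extendBlock_eq_iff.2 ⟨by ext c; simp [placementOf_eq_inl_iff], rfl⟩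
  · change ((p.nonzero.erase lastPair).image restrictBlock).image
      (fun s => extendBlock {c | p.placementOf c = .inr s} s) = p.nonzero
    rw [erase_eq_of_notMem hp, image_image, image_congr (g := id) fun b hb => ?_, image_id]
    exact extendBlock_eq_iff.2 ⟨by ext c; simp [placementOf_eq_inr_iff p hp hb], rfl⟩

def lastPairBlockEquiv :
    JSPartition n j γ ≃ {p : JSPartition (n + 1) (j + 1) γ // lastPair ∈ p.nonzero} where
  toFun q := ⟨q.addLastPair, mem_insert_self _ _⟩
  invFun p := p.1.removeLastPair p.2
  left_inv q := q.removeLastPair_addLastPair _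
  right_inv p := Subtype.ext (p.1.addLastPair_removeLastPair p.2)

noncomputable def placementEquiv :
    {x : JSPartition n j γ × (Bool → Fin γ ⊕ Finset (Fin n × Bool)) //
      IsPlacement x.1.nonzero x.2} ≃
      {p : JSPartition (n + 1) j γ // lastPair ∉ p.nonzero} where
  toFun x := ⟨x.1.1.insertLast x.1.2 x.2, lastPair_notMem_nonzero_insertLast _ _ _⟩
  invFun p := ⟨(p.1.eraseLast p.2, p.1.placementOf), p.1.isPlacement_placementOf p.2⟩
  left_inv x := Subtype.ext <| Prod.ext (eraseLast_insertLast _ _ x.2)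
    (placementOf_insertLast _ _ x.2)
  right_inv p := Subtype.ext (p.1.insertLast_eraseLast p.2)

lemma card_succ_succ :
    Nat.card (JSPartition (n + 1) (j + 1) γ) =
      Nat.card (JSPartition n j γ) +
        (j + 1) * (j + 2 * γ) * Nat.card (JSPartition n (j + 1) γ) := by
  classical
  have := Fintype.ofFinite (JSPartition n (j + 1) γ)
  rw [← Nat.card_congr (Equiv.sumCompl fun p : JSPartition (n + 1) (j + 1) γ =>
      lastPair ∈ p.nonzero),
    Nat.card_sum, ← Nat.card_congr lastPairBlockEquiv, ← Nat.card_congr placementEquiv,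
    Nat.card_congr (Equiv.subtypeProdEquivSigmaSubtype fun (q : JSPartition n (j + 1) γ) f =>
      IsPlacement q.nonzero f),
    Nat.card_sigma]
  simp only [card_isPlacement, card_nonzero]
  rw [sum_const, card_univ, ← Nat.card_eq_fintype_card, smul_eq_mul,
    show j + 1 + 2 * γ - 1 = j + 2 * γ by omega, mul_comm]

end JSPartition

/-- The Jacobi-Stirling number `JS_γ(n,j)` counts the Jacobi-Stirling set partitions
of `[n]₂` into `γ` zero blocks and `j` nonzero blocks. -/
theorem JS_counts_partitions (n j γ : ℕ) :
    JS (γ : ℚ) n j = (Nat.card (JSPartition n j γ) : ℚ) := by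
  induction n generalizing j with
  | zero => cases j <;> simp [JS, Nat.card_of_isEmpty]
  | succ n ih =>
    cases j with
    | zero => simp [JS, Nat.card_of_isEmpty]
    | succ j =>
      rw [JS, JSPartition.card_succ_succ, ih, ih]
      push_cast
      ring
end
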